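/- Let u : [0, 3L] × S¹ → ℝ be harmonic (Δu = 0) with ∫_{{t}×S¹} u dθ = 0 for all t. Define ‖u‖²_{1,i} = ∫_{[(i-1)L, iL]×S¹} (|u|² + |∇u|²). Then for L sufficiently large, either ‖u‖_{1,2} ≤ e^{-L/2} ‖u‖_{1,1} or ‖u‖_{1,2} ≤ e^{-L/2} ‖u‖_{1,3}. -/

import Mathlib

open Real


open Real Set MeasureTheory intervalIntegral

noncomputable section ThreeCyl

/-- t-partial derivative of a curried function -/
def pdt (u : ℝ → ℝ → ℝ) : ℝ → ℝ → ℝ := fun t θ => deriv (fun s => u s θ) t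
/-- θ-partial derivative of a curried function -/
def pdθ (u : ℝ → ℝ → ℝ) : ℝ → ℝ → ℝ := fun t θ => deriv (fun φ => u t φ) θ

lemma hasDerivAt_slice_t {u : ℝ → ℝ → ℝ} (hu : ContDiff ℝ (⊤ : ℕ∞) fun p : ℝ × ℝ => u p.1 p.2)
    (t θ : ℝ) :
    HasDerivAt (fun s => u s θ) (fderiv ℝ (fun p : ℝ × ℝ => u p.1 p.2) (t, θ) (1, 0)) t := by
  have h1 : HasDerivAt (fun s : ℝ => (s, θ)) ((1 : ℝ), (0 : ℝ)) t := by
    simpa using (hasDerivAt_id t).prodMk (hasDerivAt_const t θ)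
  have h2 := ((hu.differentiable (by simp)) (t, θ)).hasFDerivAt
  simpa [Function.comp_def] using h2.comp_hasDerivAt t h1

lemma hasDerivAt_slice_θ {u : ℝ → ℝ → ℝ} (hu : ContDiff ℝ (⊤ : ℕ∞) fun p : ℝ × ℝ => u p.1 p.2)
    (t θ : ℝ) :
    HasDerivAt (fun φ => u t φ) (fderiv ℝ (fun p : ℝ × ℝ => u p.1 p.2) (t, θ) (0, 1)) θ := by
  have h1 : HasDerivAt (fun φ : ℝ => (t, φ)) ((0 : ℝ), (1 : ℝ)) θ := by
    simpa using (hasDerivAt_const θ t).prodMk (hasDerivAt_id θ)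
  have h2 := ((hu.differentiable (by simp)) (t, θ)).hasFDerivAt
  simpa [Function.comp_def] using h2.comp_hasDerivAt θ h1

lemma pdt_eq {u : ℝ → ℝ → ℝ} (hu : ContDiff ℝ (⊤ : ℕ∞) fun p : ℝ × ℝ => u p.1 p.2) (t θ : ℝ) :
    pdt u t θ = fderiv ℝ (fun p : ℝ × ℝ => u p.1 p.2) (t, θ) (1, 0) :=
  (hasDerivAt_slice_t hu t θ).deriv

lemma pdθ_eq {u : ℝ → ℝ → ℝ} (hu : ContDiff ℝ (⊤ : ℕ∞) fun p : ℝ × ℝ => u p.1 p.2) (t θ : ℝ) :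
    pdθ u t θ = fderiv ℝ (fun p : ℝ × ℝ => u p.1 p.2) (t, θ) (0, 1) :=
  (hasDerivAt_slice_θ hu t θ).deriv

lemma hasDerivAt_pdt {u : ℝ → ℝ → ℝ} (hu : ContDiff ℝ (⊤ : ℕ∞) fun p : ℝ × ℝ => u p.1 p.2)
    (t θ : ℝ) : HasDerivAt (fun s => u s θ) (pdt u t θ) t := by
  rw [pdt_eq hu]; exact hasDerivAt_slice_t hu t θ

lemma hasDerivAt_pdθ {u : ℝ → ℝ → ℝ} (hu : ContDiff ℝ (⊤ : ℕ∞) fun p : ℝ × ℝ => u p.1 p.2)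
    (t θ : ℝ) : HasDerivAt (fun φ => u t φ) (pdθ u t θ) θ := by
  rw [pdθ_eq hu]; exact hasDerivAt_slice_θ hu t θ

lemma contDiff_pdt {u : ℝ → ℝ → ℝ} (hu : ContDiff ℝ (⊤ : ℕ∞) fun p : ℝ × ℝ => u p.1 p.2) :
    ContDiff ℝ (⊤ : ℕ∞) fun p : ℝ × ℝ => pdt u p.1 p.2 := by
  have h : ContDiff ℝ (⊤ : ℕ∞) fun p : ℝ × ℝ =>
      fderiv ℝ (fun q : ℝ × ℝ => u q.1 q.2) p (1, 0) :=
    (hu.fderiv_right (le_of_eq (by rfl))).clm_apply contDiff_const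
  have e : (fun p : ℝ × ℝ => pdt u p.1 p.2)
      = fun p : ℝ × ℝ => fderiv ℝ (fun q : ℝ × ℝ => u q.1 q.2) p (1, 0) :=
    funext fun p => pdt_eq hu p.1 p.2
  rw [e]; exact h

lemma contDiff_pdθ {u : ℝ → ℝ → ℝ} (hu : ContDiff ℝ (⊤ : ℕ∞) fun p : ℝ × ℝ => u p.1 p.2) :
    ContDiff ℝ (⊤ : ℕ∞) fun p : ℝ × ℝ => pdθ u p.1 p.2 := by
  have h : ContDiff ℝ (⊤ : ℕ∞) fun p : ℝ × ℝ =>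
      fderiv ℝ (fun q : ℝ × ℝ => u q.1 q.2) p (0, 1) :=
    (hu.fderiv_right (le_of_eq (by rfl))).clm_apply contDiff_const
  have e : (fun p : ℝ × ℝ => pdθ u p.1 p.2)
      = fun p : ℝ × ℝ => fderiv ℝ (fun q : ℝ × ℝ => u q.1 q.2) p (0, 1) :=
    funext fun p => pdθ_eq hu p.1 p.2
  rw [e]; exact h

lemma hasDerivAt_pdθ_t {u : ℝ → ℝ → ℝ} (hu : ContDiff ℝ (⊤ : ℕ∞) fun p : ℝ × ℝ => u p.1 p.2)
    (t θ : ℝ) :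
    HasDerivAt (fun s => pdθ u s θ)
      (fderiv ℝ (fderiv ℝ (fun p : ℝ × ℝ => u p.1 p.2)) (t, θ) (1, 0) (0, 1)) t := by
  set U := fun p : ℝ × ℝ => u p.1 p.2 with hU
  have hF' : HasFDerivAt (fderiv ℝ U) (fderiv ℝ (fderiv ℝ U) (t, θ)) (t, θ) :=
    (((hu.fderiv_right (m := (⊤ : ℕ∞)) (le_of_eq (by rfl))).differentiable (by simp)) (t, θ)).hasFDerivAt
  have hA : HasFDerivAt (fun L : ℝ × ℝ →L[ℝ] ℝ => L ((0 : ℝ), (1 : ℝ)))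
      (ContinuousLinearMap.apply ℝ ℝ ((0 : ℝ), (1 : ℝ))) (fderiv ℝ U (t, θ)) :=
    (ContinuousLinearMap.apply ℝ ℝ ((0 : ℝ), (1 : ℝ))).hasFDerivAt
  have hG := hA.comp (t, θ) hF'
  have h1 : HasDerivAt (fun s : ℝ => (s, θ)) ((1 : ℝ), (0 : ℝ)) t := by
    simpa using (hasDerivAt_id t).prodMk (hasDerivAt_const t θ)
  have h2 := hG.comp_hasDerivAt t h1
  have e : (fun s => pdθ u s θ) = fun s : ℝ => fderiv ℝ U (s, θ) ((0 : ℝ), (1 : ℝ)) :=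
    funext fun s => pdθ_eq hu s θ
  rw [e]
  simpa [Function.comp_def] using h2

lemma hasDerivAt_pdt_θ {u : ℝ → ℝ → ℝ} (hu : ContDiff ℝ (⊤ : ℕ∞) fun p : ℝ × ℝ => u p.1 p.2)
    (t θ : ℝ) :
    HasDerivAt (fun φ => pdt u t φ)
      (fderiv ℝ (fderiv ℝ (fun p : ℝ × ℝ => u p.1 p.2)) (t, θ) (0, 1) (1, 0)) θ := by
  set U := fun p : ℝ × ℝ => u p.1 p.2 with hU
  have hF' : HasFDerivAt (fderiv ℝ U) (fderiv ℝ (fderiv ℝ U) (t, θ)) (t, θ) :=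
    (((hu.fderiv_right (m := (⊤ : ℕ∞)) (le_of_eq (by rfl))).differentiable (by simp)) (t, θ)).hasFDerivAt
  have hA : HasFDerivAt (fun L : ℝ × ℝ →L[ℝ] ℝ => L ((1 : ℝ), (0 : ℝ)))
      (ContinuousLinearMap.apply ℝ ℝ ((1 : ℝ), (0 : ℝ))) (fderiv ℝ U (t, θ)) :=
    (ContinuousLinearMap.apply ℝ ℝ ((1 : ℝ), (0 : ℝ))).hasFDerivAt
  have hG := hA.comp (t, θ) hF'
  have h1 : HasDerivAt (fun φ : ℝ => (t, φ)) ((0 : ℝ), (1 : ℝ)) θ := by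
    simpa using (hasDerivAt_const θ t).prodMk (hasDerivAt_id θ)
  have h2 := hG.comp_hasDerivAt θ h1
  have e : (fun φ => pdt u t φ) = fun φ : ℝ => fderiv ℝ U (t, φ) ((1 : ℝ), (0 : ℝ)) :=
    funext fun φ => pdt_eq hu t φ
  rw [e]
  simpa [Function.comp_def] using h2

/-- Clairaut: mixed partials commute for smooth functions. -/
lemma clairaut {u : ℝ → ℝ → ℝ} (hu : ContDiff ℝ (⊤ : ℕ∞) fun p : ℝ × ℝ => u p.1 p.2) (t θ : ℝ) :
    pdt (pdθ u) t θ = pdθ (pdt u) t θ := by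
  have hsym : IsSymmSndFDerivAt ℝ (fun p : ℝ × ℝ => u p.1 p.2) (t, θ) :=
    hu.contDiffAt.isSymmSndFDerivAt (by rw [minSmoothness_of_isRCLikeNormedField]; exact (WithTop.coe_le_coe.mpr (le_top : (2 : ℕ∞) ≤ ⊤)))
  have h1 := (hasDerivAt_pdθ_t hu t θ).deriv
  have h2 := (hasDerivAt_pdt_θ hu t θ).deriv
  show deriv (fun s => pdθ u s θ) t = deriv (fun φ => pdt u t φ) θ
  rw [h1, h2, hsym ((1 : ℝ), (0 : ℝ)) ((0 : ℝ), (1 : ℝ))]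

end ThreeCyl


open Real Set MeasureTheory intervalIntegral Metric

section B
/-- Differentiation under the interval integral for a parameter integral with
continuous derivative data. -/
lemma hasDerivAt_param {G G' : ℝ → ℝ → ℝ}
    (hGc : Continuous fun p : ℝ × ℝ => G p.1 p.2)
    (hG'c : Continuous fun p : ℝ × ℝ => G' p.1 p.2)
    (hG' : ∀ t θ : ℝ, HasDerivAt (fun s => G s θ) (G' t θ) t)
    (a b t₀ : ℝ) :
    HasDerivAt (fun t => ∫ θ in a..b, G t θ) (∫ θ in a..b, G' t₀ θ) t₀ := by
  obtain ⟨C, hC⟩ : ∃ C, ∀ p ∈ Icc (t₀ - 1) (t₀ + 1) ×ˢ uIcc a b,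
      ‖(fun p : ℝ × ℝ => G' p.1 p.2) p‖ ≤ C :=
    (IsCompact.exists_bound_of_continuousOn (isCompact_Icc.prod isCompact_uIcc)
      hG'c.continuousOn)
  have key := intervalIntegral.hasDerivAt_integral_of_dominated_loc_of_deriv_le
    (F := fun t θ => G t θ) (F' := fun t θ => G' t θ) (x₀ := t₀) (μ := volume)
    (a := a) (b := b) (bound := fun _ => C) (Metric.ball_mem_nhds t₀ one_pos)
    (Filter.Eventually.of_forall fun x =>
      ((hGc.comp (continuous_const.prodMk continuous_id)).aestronglyMeasurable))
    ((hGc.comp (continuous_const.prodMk continuous_id)).intervalIntegrable a b)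
    ((hG'c.comp (continuous_const.prodMk continuous_id)).aestronglyMeasurable)
    (Filter.Eventually.of_forall fun θ hθ x hx => by
      have : (x, θ) ∈ Icc (t₀ - 1) (t₀ + 1) ×ˢ uIcc a b := by
        constructor
        · have := mem_ball_iff_norm.mp hx
          have h2 : |x - t₀| < 1 := by simpa [Real.norm_eq_abs] using this
          have := abs_lt.mp h2
          exact ⟨by linarith [this.1], by linarith [this.2]⟩
        · exact uIoc_subset_uIcc hθ
      exact hC _ this)
    intervalIntegrable_const
    (Filter.Eventually.of_forall fun θ hθ x hx => hG' x θ)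
  exact key.2

/-- If a function vanishes on `[a,b]` then so does its (continuous) derivative. -/
lemma deriv_vanish_on_Icc {f f' : ℝ → ℝ} (hf : ∀ t, HasDerivAt f (f' t) t)
    (hc : Continuous f') {a b : ℝ} (hab : a < b) (h0 : ∀ t ∈ Icc a b, f t = 0) :
    ∀ t ∈ Icc a b, f' t = 0 := by
  have hIoo : ∀ t ∈ Ioo a b, f' t = 0 := by
    intro t ht
    have hev : f =ᶠ[nhds t] fun _ => (0 : ℝ) := by
      filter_upwards [Ioo_mem_nhds ht.1 ht.2] with x hx using h0 x (Ioo_subset_Icc_self hx)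
    have : deriv f t = deriv (fun _ => (0 : ℝ)) t := hev.deriv_eq
    rw [(hf t).deriv] at this
    simpa using this
  have hcl : Icc a b ⊆ {t | f' t = 0} := by
    have hclosed : IsClosed {t | f' t = 0} := isClosed_eq hc continuous_const
    have : closure (Ioo a b) ⊆ {t | f' t = 0} := hclosed.closure_subset_iff.mpr hIoo
    rwa [closure_Ioo hab.ne] at this
  exact fun t ht => hcl ht

end B


section Wirt
open Complex

lemma parseval_aux {H : ℝ → ℂ} (hc : Continuous H) (hper : ∀ x, H (x + 2 * π) = H x)
    (hab : (0:ℝ) < 0 + 2 * π) :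
    Summable (fun n : ℤ => ‖fourierCoeffOn hab H n‖ ^ 2) ∧
    ∑' n : ℤ, ‖fourierCoeffOn hab H n‖ ^ 2
      = (1 / (2 * π)) * ∫ x in (0:ℝ)..(2 * π), ‖H x‖ ^ 2 := by
  haveI hT : Fact (0 < 2 * π) := ⟨by positivity⟩
  set K : AddCircle (2 * π) → ℂ := AddCircle.liftIco (2 * π) 0 H with hK
  have hKc : Continuous K := AddCircle.liftIco_continuous (hper 0).symm hc.continuousOn
  set Kc : C(AddCircle (2 * π), ℂ) := ⟨K, hKc⟩ with hKc2
  set KL : Lp ℂ 2 (@AddCircle.haarAddCircle (2 * π) hT) :=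
    ContinuousMap.toLp (E := ℂ) 2 AddCircle.haarAddCircle ℂ Kc with hKL
  have hcoeff : ∀ n : ℤ, fourierCoeff (KL : AddCircle (2 * π) → ℂ) n
      = fourierCoeffOn hab H n := by
    intro n
    rw [hKL, fourierCoeff_toLp]
    exact fourierCoeff_liftIco_eq H n
  have hpars := tsum_sq_fourierCoeff KL
  -- summability
  have hsum : Summable (fun n : ℤ => ‖fourierCoeffOn hab H n‖ ^ 2) := by
    have hmem := lp.memℓp (fourierBasis.repr KL)
    have h2 := hmem.summable (by norm_num : (0:ℝ) < (2 : ENNReal).toReal)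
    have : (fun n : ℤ => ‖fourierCoeffOn hab H n‖ ^ 2)
        = fun n : ℤ => ‖(fourierBasis.repr KL) n‖ ^ ((2 : ENNReal).toReal) := by
      funext n
      rw [fourierBasis_repr, hcoeff n, ENNReal.toReal_ofNat,
        ← Real.rpow_natCast ‖fourierCoeffOn hab H n‖ 2]
      norm_num
    rw [this]
    exact h2
  refine ⟨hsum, ?_⟩
  -- pointwise identification of K on (0, 2π]
  have hKH : ∀ x ∈ Ioc (0:ℝ) (0 + 2 * π), ‖K ((x : ℝ) : AddCircle (2 * π))‖ ^ 2
      = ‖H x‖ ^ 2 := by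
    intro x hx
    rcases lt_or_eq_of_le hx.2 with h | h
    · rw [hK, AddCircle.liftIco_coe_apply ⟨le_of_lt hx.1, h⟩]
    · have hxeq : x = 0 + 2 * π := h
      have : ((x : ℝ) : AddCircle (2 * π)) = ((0 : ℝ) : AddCircle (2 * π)) := by
        rw [hxeq]; exact AddCircle.coe_add_period (2 * π) 0
      rw [this, hK, AddCircle.liftIco_coe_apply ⟨le_refl 0, by simpa using hT.out⟩]
      rw [hxeq, hper 0]
  -- integral identification
  have hint : (∫ t, ‖(KL : AddCircle (2 * π) → ℂ) t‖ ^ 2 ∂AddCircle.haarAddCircle)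
      = (1 / (2 * π)) * ∫ x in (0:ℝ)..(2 * π), ‖H x‖ ^ 2 := by
    have hae : (KL : AddCircle (2 * π) → ℂ) =ᵐ[AddCircle.haarAddCircle] Kc :=
      ContinuousMap.coeFn_toLp _ _
    have h1 : (∫ t, ‖(KL : AddCircle (2 * π) → ℂ) t‖ ^ 2 ∂AddCircle.haarAddCircle)
        = ∫ t, ‖K t‖ ^ 2 ∂AddCircle.haarAddCircle := by
      apply MeasureTheory.integral_congr_ae
      filter_upwards [hae] with t ht
      rw [ht]; rfl
    have h2 := AddCircle.integral_preimage (2 * π) 0 (fun b => ‖K b‖ ^ 2)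
    have h3 : (∫ b : AddCircle (2 * π), ‖K b‖ ^ 2)
        = (2 * π) * ∫ t, ‖K t‖ ^ 2 ∂AddCircle.haarAddCircle := by
      rw [AddCircle.volume_eq_smul_haarAddCircle, MeasureTheory.integral_smul_measure,
        ENNReal.toReal_ofReal (by positivity : (0:ℝ) ≤ 2 * π)]
      simp [smul_eq_mul]
    have h4 : (∫ x in Ioc (0:ℝ) (0 + 2 * π), ‖K ((x : ℝ) : AddCircle (2 * π))‖ ^ 2)
        = ∫ x in Ioc (0:ℝ) (0 + 2 * π), ‖H x‖ ^ 2 :=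
      setIntegral_congr_fun measurableSet_Ioc hKH
    have h5 : (∫ x in (0:ℝ)..(2 * π), ‖H x‖ ^ 2)
        = ∫ x in Ioc (0:ℝ) (0 + 2 * π), ‖H x‖ ^ 2 := by
      rw [intervalIntegral.integral_of_le (by positivity : (0:ℝ) ≤ 2 * π), zero_add]
    rw [h1, h5, ← h4, h2, h3]
    field_simp
  rw [← hint, ← hpars]
  congr 1
  funext n
  rw [hcoeff n]


/-- Wirtinger's inequality for smooth 2π-periodic functions with zero mean. -/
lemma wirtinger {g g' : ℝ → ℝ} (hg : ∀ x, HasDerivAt g (g' x) x) (hg'c : Continuous g')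
    (hper : ∀ x, g (x + 2 * π) = g x) (hmean : ∫ x in (0:ℝ)..(2 * π), g x = 0) :
    ∫ x in (0:ℝ)..(2 * π), (g x) ^ 2 ≤ ∫ x in (0:ℝ)..(2 * π), (g' x) ^ 2 := by
  haveI hT : Fact (0 < 2 * π) := ⟨by positivity⟩
  have hgc : Continuous g := by
    rw [continuous_iff_continuousAt]; exact fun x => (hg x).continuousAt
  set G : ℝ → ℂ := fun x => (g x : ℂ) with hG
  set G' : ℝ → ℂ := fun x => (g' x : ℂ) with hG'
  have hGc : Continuous G := Complex.continuous_ofReal.comp hgc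
  have hG'c2 : Continuous G' := Complex.continuous_ofReal.comp hg'c
  have hab : (0:ℝ) < 0 + 2 * π := by simpa using hT.out
  set c : ℤ → ℂ := fun n => fourierCoeffOn hab G n with hc
  set d : ℤ → ℂ := fun n => fourierCoeffOn hab G' n with hd
  have hpne : ((π : ℂ)) ≠ 0 := by exact_mod_cast Real.pi_ne_zero
  -- derivative relation
  have hrel : ∀ n : ℤ, n ≠ 0 → d n = I * n * c n := by
    intro n hn
    have hder : ∀ x ∈ uIcc (0:ℝ) (0 + 2 * π), HasDerivAt G (G' x) x :=
      fun x _ => (hg x).ofReal_comp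
    have key := fourierCoeffOn_of_hasDerivAt hab hn hder
      (hG'c2.intervalIntegrable 0 (0 + 2 * π))
    have hGper : G (0 + 2 * π) = G 0 := by
      simp only [hG]; norm_cast; simpa using hper 0
    rw [hGper, sub_self, mul_zero, zero_sub] at key
    have hco : (((0 : ℝ) + 2 * π : ℝ) : ℂ) - ((0 : ℝ) : ℂ) = 2 * (π : ℂ) := by
      push_cast; ring
    rw [hco] at key
    have hnne : ((n : ℂ)) ≠ 0 := by exact_mod_cast hn
    show fourierCoeffOn hab G' n = I * n * fourierCoeffOn hab G n
    rw [key]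
    field_simp
  -- zero-th coefficient
  have hc0 : c 0 = 0 := by
    rw [hc]
    simp only [fourierCoeffOn_eq_integral]
    simp only [neg_zero, fourier_zero, one_smul]
    have h1 : ∫ x in (0:ℝ)..(0 + 2 * π), G x
        = ((∫ x in (0:ℝ)..(0 + 2 * π), g x : ℝ) : ℂ) := intervalIntegral.integral_ofReal
    have h2 : (∫ x in (0:ℝ)..(0 + 2 * π), g x) = 0 := by rw [zero_add]; exact hmean
    rw [h1, h2]
    simp
  -- periodicity of G, G'
  have hGper : ∀ x, G (x + 2 * π) = G x := by
    intro x; simp only [hG]; norm_cast; exact hper x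
  have hg'per : ∀ x, g' (x + 2 * π) = g' x := by
    intro x
    have h1 : g' (x + 2 * π) = deriv g (x + 2 * π) := ((hg (x + 2 * π)).deriv).symm
    have h2 : g' x = deriv g x := ((hg x).deriv).symm
    rw [h1, h2]
    have h3 : deriv (fun y => g (y + 2 * π)) x = deriv g (x + 2 * π) := by
      simpa using deriv_comp_add_const g (2 * π) x
    rw [← h3]
    congr 1
    exact funext fun y => hper y
  have hG'per : ∀ x, G' (x + 2 * π) = G' x := by
    intro x; simp only [hG']; norm_cast; exact hg'per x
  have hP1 := parseval_aux hGc hGper hab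
  have hP2 := parseval_aux hG'c2 hG'per hab
  -- compare coefficients
  have hcmp : ∀ n : ℤ, ‖c n‖ ^ 2 ≤ ‖d n‖ ^ 2 := by
    intro n
    by_cases hn : n = 0
    · rw [hn, hc0]; simpa using sq_nonneg ‖d 0‖
    · rw [hrel n hn]
      have h1 : ‖I * (n : ℂ) * c n‖ = ‖I * (n : ℂ)‖ * ‖c n‖ := norm_mul _ _
      have h2 : ‖I * (n : ℂ)‖ = |(n : ℝ)| := by
        rw [norm_mul, Complex.norm_I, one_mul]
        exact_mod_cast Complex.norm_intCast n
      have h3 : (1 : ℝ) ≤ |(n : ℝ)| := by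
        have := Int.one_le_abs (by omega : n ≠ 0)
        exact_mod_cast (by exact_mod_cast this : (1:ℝ) ≤ |(n:ℝ)|)
      have : ‖c n‖ ≤ ‖I * (n : ℂ) * c n‖ := by
        rw [h1, h2]
        nlinarith [norm_nonneg (c n)]
      exact pow_le_pow_left₀ (norm_nonneg _) this 2
  have hts := Summable.tsum_le_tsum hcmp hP1.1 hP2.1
  rw [hP1.2, hP2.2] at hts
  have hnorm1 : (∫ x in (0:ℝ)..(2 * π), ‖G x‖ ^ 2) = ∫ x in (0:ℝ)..(2 * π), (g x) ^ 2 := by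
    apply intervalIntegral.integral_congr
    intro x _
    simp only [hG]
    rw [Complex.norm_real]
    exact sq_abs (g x)
  have hnorm2 : (∫ x in (0:ℝ)..(2 * π), ‖G' x‖ ^ 2) = ∫ x in (0:ℝ)..(2 * π), (g' x) ^ 2 := by
    apply intervalIntegral.integral_congr
    intro x _
    simp only [hG']
    rw [Complex.norm_real]
    exact sq_abs (g' x)
  rw [hnorm1, hnorm2] at hts
  have hpos : (0:ℝ) < 1 / (2 * π) := by positivity
  exact (mul_le_mul_iff_right₀ hpos).mp hts

end Wirt


open Real Set MeasureTheory intervalIntegral Metric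

section MaxPrin

lemma max_principle {w w' w'' : ℝ → ℝ} {a b : ℝ} (hab : a ≤ b)
    (hd1 : ∀ t, HasDerivAt w (w' t) t) (hd2 : ∀ t, HasDerivAt w' (w'' t) t)
    (hineq : ∀ t ∈ Icc a b, 4 * w t ≤ w'' t)
    (ha : w a ≤ 0) (hb : w b ≤ 0) : ∀ t ∈ Icc a b, w t ≤ 0 := by
  by_contra hcon
  push_neg at hcon
  obtain ⟨t₀, ht₀, ht₀pos⟩ := hcon
  have hwc : Continuous w := by
    rw [continuous_iff_continuousAt]; exact fun x => (hd1 x).continuousAt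
  have hw'c : Continuous w' := by
    rw [continuous_iff_continuousAt]; exact fun x => (hd2 x).continuousAt
  obtain ⟨c, hc, hcmax⟩ := isCompact_Icc.exists_isMaxOn (nonempty_Icc.mpr hab)
    hwc.continuousOn
  have hwc_pos : 0 < w c := lt_of_lt_of_le ht₀pos (hcmax ht₀)
  have hca : c ≠ a := fun h => absurd (h ▸ hwc_pos) (not_lt.mpr ha)
  have hcb : c ≠ b := fun h => absurd (h ▸ hwc_pos) (not_lt.mpr hb)
  have hcoo : c ∈ Ioo a b := ⟨lt_of_le_of_ne hc.1 (Ne.symm hca), lt_of_le_of_ne hc.2 hcb⟩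
  -- Choose a small interval to the right of c where w > 0
  have hopen : IsOpen ({x | 0 < w x} ∩ Ioo a b) := (isOpen_lt continuous_const hwc).inter isOpen_Ioo
  have hmem : c ∈ {x | 0 < w x} ∩ Ioo a b := ⟨hwc_pos, hcoo⟩
  obtain ⟨δ, hδpos, hball⟩ := Metric.isOpen_iff.mp hopen c hmem
  set η := δ / 2 with hη
  have hηpos : 0 < η := by positivity
  have hsub : Icc c (c + η) ⊆ {x | 0 < w x} ∩ Ioo a b := by
    intro x hx
    apply hball
    rw [mem_ball_iff_norm, Real.norm_eq_abs, abs_lt]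
    constructor <;> [linarith [hx.1]; linarith [hx.2]]
  -- w' c = 0
  have hlocmax : IsLocalMax w c :=
    hcmax.isLocalMax (Icc_mem_nhds hcoo.1 hcoo.2)
  have hw'c0 : w' c = 0 := by
    have := hlocmax.deriv_eq_zero
    rwa [(hd1 c).deriv] at this
  -- w' is strictly monotone on [c, c+η]
  have hw'mono : StrictMonoOn w' (Icc c (c + η)) := by
    apply strictMonoOn_of_deriv_pos (convex_Icc _ _) hw'c.continuousOn
    intro x hx
    rw [interior_Icc] at hx
    rw [(hd2 x).deriv]
    have hx' : x ∈ Icc c (c + η) := Ioo_subset_Icc_self hx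
    have hmem := hsub hx'
    have hwx : 0 < w x := hmem.1
    calc (0:ℝ) < 4 * w x := by linarith
    _ ≤ w'' x := hineq x (Ioo_subset_Icc_self hmem.2)
  -- hence w' > 0 on (c, c+η], so w is strictly monotone there
  have hwmono : StrictMonoOn w (Icc c (c + η)) := by
    apply strictMonoOn_of_deriv_pos (convex_Icc _ _) hwc.continuousOn
    intro x hx
    rw [interior_Icc] at hx
    rw [(hd1 x).deriv]
    have := hw'mono (left_mem_Icc.mpr (by linarith)) (Ioo_subset_Icc_self hx) hx.1
    linarith [hw'c0]
  have hlt : w c < w (c + η) :=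
    hwmono (left_mem_Icc.mpr (by linarith)) (right_mem_Icc.mpr (by linarith)) (by linarith)
  have hin : c + η ∈ Icc a b := by
    have := hsub (right_mem_Icc.mpr (by linarith))
    exact Ioo_subset_Icc_self this.2
  exact absurd (hcmax hin) (not_le.mpr hlt)

/-- Comparison estimate: nonnegative functions with `w'' ≥ 4w` decay exponentially
from the boundary. -/
lemma comparison_estimate {φ φ' φ'' : ℝ → ℝ} {a b : ℝ} (hab : a ≤ b)
    (hd1 : ∀ t, HasDerivAt φ (φ' t) t) (hd2 : ∀ t, HasDerivAt φ' (φ'' t) t)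
    (hpos : ∀ t, 0 ≤ φ t) (hineq : ∀ t ∈ Icc a b, 4 * φ t ≤ φ'' t) :
    ∀ t ∈ Icc a b, φ t ≤ φ a * exp (-2 * (t - a)) + φ b * exp (-2 * (b - t)) := by
  set ψ : ℝ → ℝ := fun t => φ a * exp (-2 * (t - a)) + φ b * exp (-2 * (b - t)) with hψ
  set ψ' : ℝ → ℝ := fun t => φ a * (-2 * exp (-2 * (t - a))) + φ b * (2 * exp (-2 * (b - t)))
    with hψ'
  set ψ'' : ℝ → ℝ := fun t => φ a * (4 * exp (-2 * (t - a))) + φ b * (4 * exp (-2 * (b - t)))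
    with hψ''
  have hψd1 : ∀ t, HasDerivAt ψ (ψ' t) t := by
    intro t
    have h1 : HasDerivAt (fun t => -2 * (t - a)) (-2) t := by
      simpa using ((hasDerivAt_id t).sub_const a).const_mul (-2 : ℝ)
    have h2 : HasDerivAt (fun t => -2 * (b - t)) (2) t := by
      simpa using ((hasDerivAt_const t b).sub (hasDerivAt_id t)).const_mul (-2 : ℝ)
    have e1 := (h1.exp).const_mul (φ a)
    have e2 := (h2.exp).const_mul (φ b)
    refine (e1.add e2).congr_deriv ?_
    simp only [hψ']
    ring
  have hψd2 : ∀ t, HasDerivAt ψ' (ψ'' t) t := by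
    intro t
    have h1 : HasDerivAt (fun t => -2 * (t - a)) (-2) t := by
      simpa using ((hasDerivAt_id t).sub_const a).const_mul (-2 : ℝ)
    have h2 : HasDerivAt (fun t => -2 * (b - t)) (2) t := by
      simpa using ((hasDerivAt_const t b).sub (hasDerivAt_id t)).const_mul (-2 : ℝ)
    have e1 := ((h1.exp).const_mul (-2 : ℝ)).const_mul (φ a)
    have e2 := ((h2.exp).const_mul (2 : ℝ)).const_mul (φ b)
    refine (e1.add e2).congr_deriv ?_
    simp only [hψ'']
    ring
  set w : ℝ → ℝ := fun t => φ t - ψ t with hw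
  have hwd1 : ∀ t, HasDerivAt w (φ' t - ψ' t) t := fun t => (hd1 t).sub (hψd1 t)
  have hwd2 : ∀ t, HasDerivAt (fun t => φ' t - ψ' t) (φ'' t - ψ'' t) t :=
    fun t => (hd2 t).sub (hψd2 t)
  have hkey : ∀ t ∈ Icc a b, w t ≤ 0 := by
    apply max_principle hab hwd1 hwd2
    · intro t ht
      have h1 := hineq t ht
      have h2 : ψ'' t = 4 * ψ t := by simp only [hψ, hψ'']; ring
      simp only [hw]
      rw [h2]
      linarith
    · simp only [hw, hψ]
      have h1 : exp (-2 * (a - a)) = 1 := by norm_num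
      rw [h1]
      nlinarith [hpos b, exp_pos (-2 * (b - a))]
    · simp only [hw, hψ]
      have h1 : exp (-2 * (b - b)) = 1 := by norm_num
      rw [h1]
      nlinarith [hpos a, exp_pos (-2 * (b - a))]
  intro t ht
  have := hkey t ht
  simp only [hw, hψ] at this
  linarith

end MaxPrin


open Real Set MeasureTheory intervalIntegral

section Per

lemma periodic_pdt {u : ℝ → ℝ → ℝ} (hper : ∀ t θ : ℝ, u t (θ + 2 * π) = u t θ) :
    ∀ t θ : ℝ, (fun t θ => deriv (fun s => u s θ) t) t (θ + 2 * π)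
      = (fun t θ => deriv (fun s => u s θ) t) t θ := by
  intro t θ
  simp only
  congr 1
  exact funext fun s => hper s θ

lemma periodic_pdθ' {u : ℝ → ℝ → ℝ} (hper : ∀ t θ : ℝ, u t (θ + 2 * π) = u t θ) :
    ∀ t θ : ℝ, deriv (fun φ => u t φ) (θ + 2 * π) = deriv (fun φ => u t φ) θ := by
  intro t θ
  have h3 : deriv (fun y => u t (y + 2 * π)) θ = deriv (fun φ => u t φ) (θ + 2 * π) := by
    simpa using deriv_comp_add_const (fun φ => u t φ) (2 * π) θ
  rw [← h3]
  congr 1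
  exact funext fun y => hper t y

end Per


section Main
open Real Set MeasureTheory intervalIntegral

noncomputable def pE (u : ℝ → ℝ → ℝ) : ℝ → ℝ :=
  fun t => ∫ θ in (0:ℝ)..(2 * π), ((pdt u t θ) ^ 2 + (pdθ u t θ) ^ 2)

noncomputable def pF (u : ℝ → ℝ → ℝ) : ℝ → ℝ :=
  fun t => ∫ θ in (0:ℝ)..(2 * π), ((u t θ) ^ 2 + (pdt u t θ) ^ 2 + (pdθ u t θ) ^ 2)

noncomputable def pE1 (u : ℝ → ℝ → ℝ) : ℝ → ℝ :=
  fun t => ∫ θ in (0:ℝ)..(2 * π),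
    (2 * pdt u t θ * pdt (pdt u) t θ + 2 * pdθ u t θ * pdt (pdθ u) t θ)

noncomputable def pE2 (u : ℝ → ℝ → ℝ) : ℝ → ℝ :=
  fun t => ∫ θ in (0:ℝ)..(2 * π),
    (2 * ((pdt (pdt u) t θ) ^ 2 + pdt u t θ * pdt (pdt (pdt u)) t θ
      + (pdt (pdθ u) t θ) ^ 2 + pdθ u t θ * pdt (pdt (pdθ u)) t θ))

variable {u : ℝ → ℝ → ℝ}

lemma sliceθ_cont (hv : ContDiff ℝ (⊤ : ℕ∞) fun p : ℝ × ℝ => u p.1 p.2) (t : ℝ) :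
    Continuous fun θ => u t θ :=
  hv.continuous.comp (continuous_const.prodMk continuous_id)

lemma slicet_cont (hv : ContDiff ℝ (⊤ : ℕ∞) fun p : ℝ × ℝ => u p.1 p.2) (θ : ℝ) :
    Continuous fun t => u t θ :=
  hv.continuous.comp (continuous_id.prodMk continuous_const)

lemma pE_deriv1 (hu : ContDiff ℝ (⊤ : ℕ∞) fun p : ℝ × ℝ => u p.1 p.2) (t₀ : ℝ) :
    HasDerivAt (pE u) (pE1 u t₀) t₀ := by
  have hc1 := contDiff_pdt hu
  have hc2 := contDiff_pdθ hu
  have hc11 := contDiff_pdt hc1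
  have hc21 := contDiff_pdt hc2
  exact hasDerivAt_param
    (G := fun t θ => (pdt u t θ) ^ 2 + (pdθ u t θ) ^ 2)
    (G' := fun t θ => 2 * pdt u t θ * pdt (pdt u) t θ + 2 * pdθ u t θ * pdt (pdθ u) t θ)
    ((hc1.continuous.pow 2).add (hc2.continuous.pow 2))
    (((continuous_const.mul hc1.continuous).mul hc11.continuous).add
      ((continuous_const.mul hc2.continuous).mul hc21.continuous))
    (by
      intro t θ
      have h1 := (hasDerivAt_pdt hc1 t θ).mul (hasDerivAt_pdt hc1 t θ)
      have h2 := (hasDerivAt_pdt hc2 t θ).mul (hasDerivAt_pdt hc2 t θ)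
      have hcomb := h1.add h2
      have key : HasDerivAt (fun s => pdt u s θ * pdt u s θ + pdθ u s θ * pdθ u s θ)
          (2 * pdt u t θ * pdt (pdt u) t θ + 2 * pdθ u t θ * pdt (pdθ u) t θ) t := by
        refine (hcomb.congr_deriv ?_).congr_of_eventuallyEq (Filter.Eventually.of_forall fun s => ?_)
        · ring
        · rfl
      convert key using 2
      beta_reduce
      ring) 0 (2 * π) t₀

lemma pE_deriv2 (hu : ContDiff ℝ (⊤ : ℕ∞) fun p : ℝ × ℝ => u p.1 p.2) (t₀ : ℝ) :
    HasDerivAt (pE1 u) (pE2 u t₀) t₀ := by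
  have hc1 := contDiff_pdt hu
  have hc2 := contDiff_pdθ hu
  have hc11 := contDiff_pdt hc1
  have hc21 := contDiff_pdt hc2
  have hc111 := contDiff_pdt hc11
  have hc211 := contDiff_pdt hc21
  exact hasDerivAt_param
    (G := fun t θ => 2 * pdt u t θ * pdt (pdt u) t θ + 2 * pdθ u t θ * pdt (pdθ u) t θ)
    (G' := fun t θ => 2 * ((pdt (pdt u) t θ) ^ 2 + pdt u t θ * pdt (pdt (pdt u)) t θ
      + (pdt (pdθ u) t θ) ^ 2 + pdθ u t θ * pdt (pdt (pdθ u)) t θ))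
    ((((continuous_const.mul hc1.continuous).mul hc11.continuous).add
      ((continuous_const.mul hc2.continuous).mul hc21.continuous)))
    (continuous_const.mul ((((hc11.continuous.pow 2).add
      (hc1.continuous.mul hc111.continuous)).add (hc21.continuous.pow 2)).add
      (hc2.continuous.mul hc211.continuous)))
    (by
      intro t θ
      have h1 := ((hasDerivAt_pdt hc1 t θ).mul (hasDerivAt_pdt hc11 t θ)).const_mul (2:ℝ)
      have h2 := ((hasDerivAt_pdt hc2 t θ).mul (hasDerivAt_pdt hc21 t θ)).const_mul (2:ℝ)
      have hcomb := h1.add h2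
      refine (hcomb.congr_deriv ?_).congr_of_eventuallyEq (Filter.Eventually.of_forall fun s => ?_)
      · ring
      · simp only [Pi.add_apply, Pi.mul_apply]; ring) 0 (2 * π) t₀

lemma pF_cont (hu : ContDiff ℝ (⊤ : ℕ∞) fun p : ℝ × ℝ => u p.1 p.2) : Continuous (pF u) := by
  have hc1 := contDiff_pdt hu
  have hc2 := contDiff_pdθ hu
  have hc11 := contDiff_pdt hc1
  have hc21 := contDiff_pdt hc2
  rw [continuous_iff_continuousAt]
  intro t₀
  have key := hasDerivAt_param
    (G := fun t θ => (u t θ) ^ 2 + (pdt u t θ) ^ 2 + (pdθ u t θ) ^ 2)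
    (G' := fun t θ => 2 * u t θ * pdt u t θ + 2 * pdt u t θ * pdt (pdt u) t θ
      + 2 * pdθ u t θ * pdt (pdθ u) t θ)
    (((hu.continuous.pow 2).add (hc1.continuous.pow 2)).add (hc2.continuous.pow 2))
    ((((continuous_const.mul hu.continuous).mul hc1.continuous).add
      ((continuous_const.mul hc1.continuous).mul hc11.continuous)).add
      ((continuous_const.mul hc2.continuous).mul hc21.continuous))
    (by
      intro t θ
      have h0 := (hasDerivAt_pdt hu t θ).mul (hasDerivAt_pdt hu t θ)
      have h1 := (hasDerivAt_pdt hc1 t θ).mul (hasDerivAt_pdt hc1 t θ)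
      have h2 := (hasDerivAt_pdt hc2 t θ).mul (hasDerivAt_pdt hc2 t θ)
      have hcomb := (h0.add h1).add h2
      refine (hcomb.congr_deriv ?_).congr_of_eventuallyEq (Filter.Eventually.of_forall fun s => ?_)
      · ring
      · simp only [Pi.add_apply, Pi.mul_apply]; ring) 0 (2 * π) t₀
  exact key.continuousAt

lemma pE_pos (hu : ContDiff ℝ (⊤ : ℕ∞) fun p : ℝ × ℝ => u p.1 p.2) (t : ℝ) : 0 ≤ pE u t := by
  apply intervalIntegral.integral_nonneg (by positivity)
  intro θ _
  positivity

lemma pF_pos (hu : ContDiff ℝ (⊤ : ℕ∞) fun p : ℝ × ℝ => u p.1 p.2) (t : ℝ) : 0 ≤ pF u t := by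
  apply intervalIntegral.integral_nonneg (by positivity)
  intro θ _
  positivity

lemma pE_le_pF (hu : ContDiff ℝ (⊤ : ℕ∞) fun p : ℝ × ℝ => u p.1 p.2) (t : ℝ) : pE u t ≤ pF u t := by
  have hc1 := contDiff_pdt hu
  have hc2 := contDiff_pdθ hu
  apply intervalIntegral.integral_mono_on (by positivity)
  · exact (((sliceθ_cont hc1 t).pow 2).add ((sliceθ_cont hc2 t).pow 2)).intervalIntegrable _ _
  · exact ((((sliceθ_cont hu t).pow 2).add ((sliceθ_cont hc1 t).pow 2)).add
      ((sliceθ_cont hc2 t).pow 2)).intervalIntegrable _ _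
  · intro x _
    nlinarith [sq_nonneg (u t x)]

/-- zero circular mean of the t-derivative -/
lemma mean_pdt (hu : ContDiff ℝ (⊤ : ℕ∞) fun p : ℝ × ℝ => u p.1 p.2) {b : ℝ} (hb : 0 < b)
    (hmean : ∀ t ∈ Icc (0:ℝ) b, ∫ θ in (0:ℝ)..(2 * π), u t θ = 0) :
    ∀ t ∈ Icc (0:ℝ) b, ∫ θ in (0:ℝ)..(2 * π), pdt u t θ = 0 := by
  have hc1 := contDiff_pdt hu
  have hc11 := contDiff_pdt hc1
  have hM : ∀ t₀ : ℝ, HasDerivAt (fun t => ∫ θ in (0:ℝ)..(2 * π), u t θ)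
      (∫ θ in (0:ℝ)..(2 * π), pdt u t₀ θ) t₀ := fun t₀ =>
    hasDerivAt_param hu.continuous hc1.continuous (fun t θ => hasDerivAt_pdt hu t θ) 0 (2 * π) t₀
  have hM1 : ∀ t₀ : ℝ, HasDerivAt (fun t => ∫ θ in (0:ℝ)..(2 * π), pdt u t θ)
      (∫ θ in (0:ℝ)..(2 * π), pdt (pdt u) t₀ θ) t₀ := fun t₀ =>
    hasDerivAt_param hc1.continuous hc11.continuous (fun t θ => hasDerivAt_pdt hc1 t θ)
      0 (2 * π) t₀
  have hM1c : Continuous fun t => ∫ θ in (0:ℝ)..(2 * π), pdt u t θ := by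
    rw [continuous_iff_continuousAt]; exact fun t => (hM1 t).continuousAt
  exact deriv_vanish_on_Icc hM hM1c hb hmean

/-- zero circular mean of the θ-derivative -/
lemma mean_pdθ (hu : ContDiff ℝ (⊤ : ℕ∞) fun p : ℝ × ℝ => u p.1 p.2)
    (hper : ∀ t θ : ℝ, u t (θ + 2 * π) = u t θ) (t : ℝ) :
    ∫ θ in (0:ℝ)..(2 * π), pdθ u t θ = 0 := by
  have hc2 := contDiff_pdθ hu
  have key := intervalIntegral.integral_eq_sub_of_hasDerivAt
    (f := fun θ => u t θ) (f' := fun θ => pdθ u t θ)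
    (fun θ _ => hasDerivAt_pdθ hu t θ) ((sliceθ_cont hc2 t).intervalIntegrable 0 (2 * π))
  rw [key]
  have h2 : (2 * π : ℝ) = 0 + 2 * π := (zero_add _).symm
  rw [h2, hper t 0, sub_self]

/-- interior by parts on the circle: `∫ f · (pdθ g) = - ∫ (pdθ f) · g` at fixed `t`,
for doubly-smooth periodic data. -/
lemma parts_θ {v w : ℝ → ℝ → ℝ} (hv : ContDiff ℝ (⊤ : ℕ∞) fun p : ℝ × ℝ => v p.1 p.2)
    (hw : ContDiff ℝ (⊤ : ℕ∞) fun p : ℝ × ℝ => w p.1 p.2)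
    (hvper : ∀ t θ : ℝ, v t (θ + 2 * π) = v t θ)
    (hwper : ∀ t θ : ℝ, w t (θ + 2 * π) = w t θ) (t : ℝ) :
    ∫ θ in (0:ℝ)..(2 * π), v t θ * pdθ w t θ
      = -∫ θ in (0:ℝ)..(2 * π), pdθ v t θ * w t θ := by
  have hcv := contDiff_pdθ hv
  have hcw := contDiff_pdθ hw
  have key := intervalIntegral.integral_mul_deriv_eq_deriv_mul
    (u := fun θ => v t θ) (u' := fun θ => pdθ v t θ)
    (v := fun θ => w t θ) (v' := fun θ => pdθ w t θ)
    (fun x _ => hasDerivAt_pdθ hv t x) (fun x _ => hasDerivAt_pdθ hw t x)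
    ((sliceθ_cont hcv t).intervalIntegrable 0 (2 * π))
    ((sliceθ_cont hcw t).intervalIntegrable 0 (2 * π))
  rw [key]
  have h2 : (2 * π : ℝ) = 0 + 2 * π := (zero_add _).symm
  rw [h2, hvper t 0, hwper t 0]
  rw [← h2]
  ring

/-- the middle-band inequality `F ≤ 2E` -/
lemma key2 (hu : ContDiff ℝ (⊤ : ℕ∞) fun p : ℝ × ℝ => u p.1 p.2)
    (hper : ∀ t θ : ℝ, u t (θ + 2 * π) = u t θ) {b : ℝ}
    (hmean : ∀ t ∈ Icc (0:ℝ) b, ∫ θ in (0:ℝ)..(2 * π), u t θ = 0) :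
    ∀ t ∈ Icc (0:ℝ) b, pF u t ≤ 2 * pE u t := by
  intro t ht
  have hc1 := contDiff_pdt hu
  have hc2 := contDiff_pdθ hu
  have hc22 := contDiff_pdθ hc2
  have hWu := wirtinger (g := fun θ => u t θ) (g' := fun θ => pdθ u t θ)
    (fun θ => hasDerivAt_pdθ hu t θ) (sliceθ_cont hc2 t) (hper t) (hmean t ht)
  have hsplit : pF u t = (∫ θ in (0:ℝ)..(2 * π), (u t θ) ^ 2)
      + ∫ θ in (0:ℝ)..(2 * π), ((pdt u t θ) ^ 2 + (pdθ u t θ) ^ 2) := by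
    rw [← intervalIntegral.integral_add (f := fun θ => u t θ ^ 2)
      (g := fun θ => pdt u t θ ^ 2 + pdθ u t θ ^ 2)
      (((sliceθ_cont hu t).pow 2).intervalIntegrable _ _)
      ((((sliceθ_cont hc1 t).pow 2).add ((sliceθ_cont hc2 t).pow 2)).intervalIntegrable _ _)]
    apply intervalIntegral.integral_congr
    intro θ _
    ring
  have hsplit2 : pE u t = (∫ θ in (0:ℝ)..(2 * π), (pdt u t θ) ^ 2)
      + ∫ θ in (0:ℝ)..(2 * π), (pdθ u t θ) ^ 2 := by
    rw [← intervalIntegral.integral_add (f := fun θ => pdt u t θ ^ 2) (g := fun θ => pdθ u t θ ^ 2)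
      (((sliceθ_cont hc1 t).pow 2).intervalIntegrable _ _)
      (((sliceθ_cont hc2 t).pow 2).intervalIntegrable _ _)]
    rfl
  have h1 : (0:ℝ) ≤ ∫ θ in (0:ℝ)..(2 * π), (pdt u t θ) ^ 2 := by
    apply intervalIntegral.integral_nonneg (by positivity)
    intro θ _; positivity
  have hEsplit : pE u t = ∫ θ in (0:ℝ)..(2 * π), ((pdt u t θ) ^ 2 + (pdθ u t θ) ^ 2) := rfl
  rw [hsplit, ← hEsplit]
  rw [hsplit2] at *
  linarith

/-- the differential inequality `E'' ≥ 4 E` -/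
lemma key1 (hu : ContDiff ℝ (⊤ : ℕ∞) fun p : ℝ × ℝ => u p.1 p.2)
    (hper : ∀ t θ : ℝ, u t (θ + 2 * π) = u t θ) {b : ℝ} (hb : 0 < b)
    (hharm : ∀ t ∈ Icc (0:ℝ) b, ∀ θ : ℝ, pdt (pdt u) t θ + pdθ (pdθ u) t θ = 0)
    (hmean : ∀ t ∈ Icc (0:ℝ) b, ∫ θ in (0:ℝ)..(2 * π), u t θ = 0) :
    ∀ t ∈ Icc (0:ℝ) b, 4 * pE u t ≤ pE2 u t := by
  have hc1 := contDiff_pdt hu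
  have hc2 := contDiff_pdθ hu
  have hc11 := contDiff_pdt hc1
  have hc21 := contDiff_pdt hc2
  have hc22 := contDiff_pdθ hc2
  have hc12 := contDiff_pdθ hc1
  have hc111 := contDiff_pdt hc11
  have hc211 := contDiff_pdt hc21
  have hc221 := contDiff_pdt hc22
  have hc222 := contDiff_pdθ hc22
  have hc212 := contDiff_pdθ hc21
  have hp1 : ∀ t θ : ℝ, pdt u t (θ + 2 * π) = pdt u t θ := periodic_pdt hper
  have hp2 : ∀ t θ : ℝ, pdθ u t (θ + 2 * π) = pdθ u t θ := periodic_pdθ' hper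
  have hp21 : ∀ t θ : ℝ, pdt (pdθ u) t (θ + 2 * π) = pdt (pdθ u) t θ := periodic_pdt hp2
  have hp22 : ∀ t θ : ℝ, pdθ (pdθ u) t (θ + 2 * π) = pdθ (pdθ u) t θ := periodic_pdθ' hp2
  have hharm_t : ∀ θ : ℝ, ∀ t ∈ Icc (0:ℝ) b,
      pdt (pdt (pdt u)) t θ + pdt (pdθ (pdθ u)) t θ = 0 := by
    intro θ
    exact deriv_vanish_on_Icc
      (f' := fun t => pdt (pdt (pdt u)) t θ + pdt (pdθ (pdθ u)) t θ)
      (fun t => (hasDerivAt_pdt hc11 t θ).add (hasDerivAt_pdt hc22 t θ))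
      ((slicet_cont hc111 θ).add (slicet_cont hc221 θ)) hb
      (fun t ht => hharm t ht θ)
  intro t ht
  -- Wirtinger inequalities
  have hW2 : (∫ θ in (0:ℝ)..(2 * π), (pdθ u t θ) ^ 2)
      ≤ ∫ θ in (0:ℝ)..(2 * π), (pdθ (pdθ u) t θ) ^ 2 :=
    wirtinger (fun θ => hasDerivAt_pdθ hc2 t θ) (sliceθ_cont hc22 t)
      (hp2 t) (mean_pdθ hu hper t)
  have hW1' : (∫ θ in (0:ℝ)..(2 * π), (pdt u t θ) ^ 2)
      ≤ ∫ θ in (0:ℝ)..(2 * π), (pdθ (pdt u) t θ) ^ 2 :=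
    wirtinger (fun θ => hasDerivAt_pdθ hc1 t θ) (sliceθ_cont hc12 t)
      (hp1 t) (mean_pdt hu hb hmean t ht)
  have hW1 : (∫ θ in (0:ℝ)..(2 * π), (pdt u t θ) ^ 2)
      ≤ ∫ θ in (0:ℝ)..(2 * π), (pdt (pdθ u) t θ) ^ 2 := by
    refine le_trans hW1' (le_of_eq ?_)
    apply intervalIntegral.integral_congr
    intro θ _
    beta_reduce
    rw [clairaut hu t θ]
  -- decompose pE2
  have hsplit : pE2 u t
      = 2 * (∫ θ in (0:ℝ)..(2 * π), (pdt (pdt u) t θ) ^ 2)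
      + 2 * (∫ θ in (0:ℝ)..(2 * π), pdt u t θ * pdt (pdt (pdt u)) t θ)
      + 2 * (∫ θ in (0:ℝ)..(2 * π), (pdt (pdθ u) t θ) ^ 2)
      + 2 * (∫ θ in (0:ℝ)..(2 * π), pdθ u t θ * pdt (pdt (pdθ u)) t θ) := by
    have i1 : IntervalIntegrable (fun θ => pdt (pdt u) t θ ^ 2) volume (0:ℝ) (2 * π) := ((sliceθ_cont hc11 t).pow 2).intervalIntegrable (0:ℝ) (2 * π)
    have i2 : IntervalIntegrable (fun θ => pdt u t θ * pdt (pdt (pdt u)) t θ) volume (0:ℝ) (2 * π) := ((sliceθ_cont hc1 t).mul (sliceθ_cont hc111 t)).intervalIntegrable (0:ℝ) (2 * π)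
    have i3 : IntervalIntegrable (fun θ => pdt (pdθ u) t θ ^ 2) volume (0:ℝ) (2 * π) := ((sliceθ_cont hc21 t).pow 2).intervalIntegrable (0:ℝ) (2 * π)
    have i4 : IntervalIntegrable (fun θ => pdθ u t θ * pdt (pdt (pdθ u)) t θ) volume (0:ℝ) (2 * π) := ((sliceθ_cont hc2 t).mul (sliceθ_cont hc211 t)).intervalIntegrable (0:ℝ) (2 * π)
    have e0 : pE2 u t = ∫ θ in (0:ℝ)..(2 * π),
        (2 * (pdt (pdt u) t θ) ^ 2 + (2 * (pdt u t θ * pdt (pdt (pdt u)) t θ)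
          + (2 * (pdt (pdθ u) t θ) ^ 2 + 2 * (pdθ u t θ * pdt (pdt (pdθ u)) t θ)))) := by
      apply intervalIntegral.integral_congr
      intro θ _
      beta_reduce
      ring
    rw [e0, intervalIntegral.integral_add (i1.const_mul 2)
        ((i2.const_mul 2).add ((i3.const_mul 2).add (i4.const_mul 2))),
      intervalIntegral.integral_add (i2.const_mul 2)
        ((i3.const_mul 2).add (i4.const_mul 2)),
      intervalIntegral.integral_add (i3.const_mul 2) (i4.const_mul 2),
      intervalIntegral.integral_const_mul, intervalIntegral.integral_const_mul,
      intervalIntegral.integral_const_mul, intervalIntegral.integral_const_mul]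
    ring
  -- identity for each piece
  have hI1 : (∫ θ in (0:ℝ)..(2 * π), (pdt (pdt u) t θ) ^ 2)
      = ∫ θ in (0:ℝ)..(2 * π), (pdθ (pdθ u) t θ) ^ 2 := by
    apply intervalIntegral.integral_congr
    intro θ _
    have h := hharm t ht θ
    have h' : pdt (pdt u) t θ = -pdθ (pdθ u) t θ := by linarith
    beta_reduce
    rw [h']
    ring
  have hI2 : (∫ θ in (0:ℝ)..(2 * π), pdt u t θ * pdt (pdt (pdt u)) t θ)
      = ∫ θ in (0:ℝ)..(2 * π), (pdt (pdθ u) t θ) ^ 2 := by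
    have e1 : (∫ θ in (0:ℝ)..(2 * π), pdt u t θ * pdt (pdt (pdt u)) t θ)
        = -∫ θ in (0:ℝ)..(2 * π), pdt u t θ * pdθ (pdt (pdθ u)) t θ := by
      rw [← intervalIntegral.integral_neg]
      apply intervalIntegral.integral_congr
      intro θ _
      have h1 := hharm_t θ t ht
      have h2 := clairaut hc2 t θ
      have h' : pdt (pdt (pdt u)) t θ = -pdθ (pdt (pdθ u)) t θ := by
        rw [← h2]; linarith
      beta_reduce
      rw [h']
      ring
    rw [e1, parts_θ hc1 hc21 hp1 hp21 t, neg_neg]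
    apply intervalIntegral.integral_congr
    intro θ _
    beta_reduce
    rw [clairaut hu t θ]
    ring
  have hI4 : (∫ θ in (0:ℝ)..(2 * π), pdθ u t θ * pdt (pdt (pdθ u)) t θ)
      = ∫ θ in (0:ℝ)..(2 * π), (pdθ (pdθ u) t θ) ^ 2 := by
    have hfun : pdt (pdθ u) = pdθ (pdt u) := by
      funext a c
      exact clairaut hu a c
    have e1 : (∫ θ in (0:ℝ)..(2 * π), pdθ u t θ * pdt (pdt (pdθ u)) t θ)
        = -∫ θ in (0:ℝ)..(2 * π), pdθ u t θ * pdθ (pdθ (pdθ u)) t θ := by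
      rw [← intervalIntegral.integral_neg]
      apply intervalIntegral.integral_congr
      intro θ _
      have e2 : pdt (pdt (pdθ u)) t θ = pdθ (pdt (pdt u)) t θ := by
        rw [hfun]
        exact clairaut hc1 t θ
      have hfun2 : (fun φ => pdt (pdt u) t φ) = fun φ => -(pdθ (pdθ u) t φ) := by
        funext φ
        have := hharm t ht φ
        linarith
      have e3 : pdθ (pdt (pdt u)) t θ = -pdθ (pdθ (pdθ u)) t θ := by
        show deriv (fun φ => pdt (pdt u) t φ) θ = -deriv (fun φ => pdθ (pdθ u) t φ) θ
        rw [hfun2]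
        exact deriv.neg
      beta_reduce
      rw [e2, e3]
      ring
    rw [e1, parts_θ hc2 hc22 hp2 hp22 t, neg_neg]
    apply intervalIntegral.integral_congr
    intro θ _
    beta_reduce
    ring
  -- decompose pE
  have hEsplit : pE u t = (∫ θ in (0:ℝ)..(2 * π), (pdt u t θ) ^ 2)
      + ∫ θ in (0:ℝ)..(2 * π), (pdθ u t θ) ^ 2 := by
    rw [← intervalIntegral.integral_add (f := fun θ => pdt u t θ ^ 2) (g := fun θ => pdθ u t θ ^ 2)
      (((sliceθ_cont hc1 t).pow 2).intervalIntegrable _ _)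
      (((sliceθ_cont hc2 t).pow 2).intervalIntegrable _ _)]
    rfl
  rw [hsplit, hI1, hI2, hI4, hEsplit]
  linarith

/-- Three-cylinder lemma for harmonic functions on [0,3L] × S¹ with zero circular means:
for L large, the middle-band W^{1,2} norm is exponentially dominated by one of the
outer bands. -/
theorem stmt6 : ∃ L₀ : ℝ, 0 < L₀ ∧ ∀ L : ℝ, L₀ ≤ L → ∀ u : ℝ → ℝ → ℝ,
    ContDiff ℝ (⊤ : ℕ∞) (fun p : ℝ × ℝ => u p.1 p.2) →
    (∀ t θ : ℝ, u t (θ + 2 * π) = u t θ) →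
    (∀ t ∈ Set.Icc (0 : ℝ) (3 * L), ∀ θ : ℝ,
      deriv (fun s => deriv (fun s' => u s' θ) s) t
        + deriv (fun φ => deriv (fun φ' => u t φ') φ) θ = 0) →
    (∀ t ∈ Set.Icc (0 : ℝ) (3 * L), ∫ θ in (0 : ℝ)..(2 * π), u t θ = 0) →
    ∀ N : ℕ → ℝ,
    (∀ i : ℕ, N i = Real.sqrt (∫ t in (((i : ℝ) - 1) * L)..((i : ℝ) * L),
        ∫ θ in (0 : ℝ)..(2 * π),
          ((u t θ) ^ 2 + (deriv (fun s => u s θ) t) ^ 2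
            + (deriv (fun φ => u t φ) θ) ^ 2))) →
    N 2 ≤ Real.exp (-L / 2) * N 1 ∨ N 2 ≤ Real.exp (-L / 2) * N 3 := by
  refine ⟨16, by norm_num, ?_⟩
  intro L hL u hu hper hharm hmean N hN
  have hπ := Real.pi_pos
  have hL0 : (0:ℝ) < L := by linarith
  have h3L : (0:ℝ) < 3 * L := by linarith
  have hharm' : ∀ t ∈ Icc (0:ℝ) (3 * L), ∀ θ : ℝ,
      pdt (pdt u) t θ + pdθ (pdθ u) t θ = 0 := hharm
  have hk1 := key1 hu hper h3L hharm' hmean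
  have hk2 := key2 hu hper (b := 3 * L) hmean
  have hEd1 := pE_deriv1 hu
  have hEd2 := pE_deriv2 hu
  have hEc : Continuous (pE u) := by
    rw [continuous_iff_continuousAt]; exact fun t => (hEd1 t).continuousAt
  have hFc := pF_cont hu
  have hEpos := pE_pos hu
  have hFpos := pF_pos hu
  have hEF := pE_le_pF hu
  have hFint : ∀ a b : ℝ, IntervalIntegrable (pF u) volume a b :=
    fun a b => hFc.intervalIntegrable a b
  have hEint : ∀ a b : ℝ, IntervalIntegrable (pE u) volume a b :=
    fun a b => hEc.intervalIntegrable a b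
  have hNF : ∀ i : ℕ, N i = Real.sqrt (∫ t in (((i:ℝ) - 1) * L)..((i:ℝ) * L), pF u t) := by
    intro i; rw [hN i]; rfl
  have hsq : ∀ lo hi : ℝ, lo ≤ hi →
      Real.sqrt (∫ t in lo..hi, pF u t) ^ 2 = ∫ t in lo..hi, pF u t := by
    intro lo hi h
    exact Real.sq_sqrt (intervalIntegral.integral_nonneg h fun x _ => hFpos x)
  have hN1 : N 1 = Real.sqrt (∫ t in (0:ℝ)..L, pF u t) := by rw [hNF 1]; norm_num
  have hN2 : N 2 = Real.sqrt (∫ t in L..(2 * L), pF u t) := by rw [hNF 2]; norm_num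
  have hN3 : N 3 = Real.sqrt (∫ t in (2 * L)..(3 * L), pF u t) := by rw [hNF 3]; norm_num
  have hN1sq : N 1 ^ 2 = ∫ t in (0:ℝ)..L, pF u t := by rw [hN1]; exact hsq _ _ (by linarith)
  have hN2sq : N 2 ^ 2 = ∫ t in L..(2 * L), pF u t := by rw [hN2]; exact hsq _ _ (by linarith)
  have hN3sq : N 3 ^ 2 = ∫ t in (2 * L)..(3 * L), pF u t := by
    rw [hN3]; exact hsq _ _ (by linarith)
  have hN1pos : 0 ≤ N 1 := by rw [hN1]; exact Real.sqrt_nonneg _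
  have hN2pos : 0 ≤ N 2 := by rw [hN2]; exact Real.sqrt_nonneg _
  have hN3pos : 0 ≤ N 3 := by rw [hN3]; exact Real.sqrt_nonneg _
  -- choose good points in the outer bands
  obtain ⟨t₁, ht₁mem, ht₁min⟩ := isCompact_Icc.exists_isMinOn (s := Icc (0:ℝ) 1)
    (nonempty_Icc.mpr (by norm_num)) hEc.continuousOn
  obtain ⟨t₂, ht₂mem, ht₂min⟩ := isCompact_Icc.exists_isMinOn (s := Icc (3 * L - 1) (3 * L))
    (nonempty_Icc.mpr (by linarith)) hEc.continuousOn
  have hEt₁ : pE u t₁ ≤ N 1 ^ 2 := by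
    have h1 : pE u t₁ = ∫ _x in (0:ℝ)..1, pE u t₁ := by
      rw [intervalIntegral.integral_const]; simp
    have h2 : (∫ _x in (0:ℝ)..1, pE u t₁) ≤ ∫ x in (0:ℝ)..1, pE u x := by
      apply intervalIntegral.integral_mono_on (by norm_num) intervalIntegrable_const (hEint 0 1)
      intro x hx
      exact isMinOn_iff.mp ht₁min x hx
    have h3 : (∫ x in (0:ℝ)..1, pE u x) ≤ ∫ x in (0:ℝ)..L, pE u x := by
      rw [← intervalIntegral.integral_add_adjacent_intervals (hEint 0 1) (hEint 1 L)]
      have h0 : 0 ≤ ∫ x in (1:ℝ)..L, pE u x :=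
        intervalIntegral.integral_nonneg (by linarith) fun x _ => hEpos x
      linarith
    have h4 : (∫ x in (0:ℝ)..L, pE u x) ≤ ∫ x in (0:ℝ)..L, pF u x :=
      intervalIntegral.integral_mono_on (by linarith) (hEint 0 L) (hFint 0 L) fun x _ => hEF x
    rw [hN1sq]
    linarith
  have hEt₂ : pE u t₂ ≤ N 3 ^ 2 := by
    have h1 : pE u t₂ = ∫ _x in (3 * L - 1)..(3 * L), pE u t₂ := by
      rw [intervalIntegral.integral_const]
      have he : (3 * L - (3 * L - 1) : ℝ) = 1 := by ring
      rw [he, one_smul]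
    have h2 : (∫ _x in (3 * L - 1)..(3 * L), pE u t₂)
        ≤ ∫ x in (3 * L - 1)..(3 * L), pE u x := by
      apply intervalIntegral.integral_mono_on (by linarith) intervalIntegrable_const (hEint _ _)
      intro x hx
      exact isMinOn_iff.mp ht₂min x hx
    have h3 : (∫ x in (3 * L - 1)..(3 * L), pE u x) ≤ ∫ x in (2 * L)..(3 * L), pE u x := by
      rw [← intervalIntegral.integral_add_adjacent_intervals (hEint (2 * L) (3 * L - 1))
        (hEint (3 * L - 1) (3 * L))]
      have h0 : 0 ≤ ∫ x in (2 * L)..(3 * L - 1), pE u x :=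
        intervalIntegral.integral_nonneg (by linarith) fun x _ => hEpos x
      linarith
    have h4 : (∫ x in (2 * L)..(3 * L), pE u x) ≤ ∫ x in (2 * L)..(3 * L), pF u x :=
      intervalIntegral.integral_mono_on (by linarith) (hEint _ _) (hFint _ _) fun x _ => hEF x
    rw [hN3sq]
    linarith
  -- comparison estimate on [t₁, t₂]
  have ht₁t₂ : t₁ ≤ t₂ := by
    have := ht₁mem.2; have := ht₂mem.1; linarith
  have hineq : ∀ t ∈ Icc t₁ t₂, 4 * pE u t ≤ pE2 u t := by
    intro t htt
    exact hk1 t ⟨by linarith [ht₁mem.1, htt.1], by linarith [ht₂mem.2, htt.2]⟩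
  have hcomp := comparison_estimate ht₁t₂ hEd1 hEd2 hEpos hineq
  -- middle band pointwise bound
  have hmid : ∀ t ∈ Icc L (2 * L),
      pF u t ≤ 2 * (pE u t₁ + pE u t₂) * Real.exp (-2 * (L - 1)) := by
    intro t htt
    have hin : t ∈ Icc (0:ℝ) (3 * L) := ⟨by linarith [htt.1], by linarith [htt.2]⟩
    have h1 := hk2 t hin
    have h2 := hcomp t ⟨by linarith [ht₁mem.2, htt.1], by linarith [ht₂mem.1, htt.2]⟩
    have e1 : Real.exp (-2 * (t - t₁)) ≤ Real.exp (-2 * (L - 1)) := by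
      apply Real.exp_le_exp.mpr
      have := ht₁mem.2; have := htt.1
      linarith
    have e2 : Real.exp (-2 * (t₂ - t)) ≤ Real.exp (-2 * (L - 1)) := by
      apply Real.exp_le_exp.mpr
      have := ht₂mem.1; have := htt.2
      linarith
    have m1 := mul_le_mul_of_nonneg_left e1 (hEpos t₁)
    have m2 := mul_le_mul_of_nonneg_left e2 (hEpos t₂)
    linarith
  -- integral bound over the middle band
  have hN2sqle : N 2 ^ 2 ≤ L * (2 * (pE u t₁ + pE u t₂) * Real.exp (-2 * (L - 1))) := by
    rw [hN2sq]
    have h1 : (∫ t in L..(2 * L), pF u t)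
        ≤ ∫ _t in L..(2 * L), 2 * (pE u t₁ + pE u t₂) * Real.exp (-2 * (L - 1)) := by
      apply intervalIntegral.integral_mono_on (by linarith) (hFint _ _) intervalIntegrable_const
      exact hmid
    rw [intervalIntegral.integral_const, smul_eq_mul] at h1
    calc (∫ t in L..(2 * L), pF u t)
        ≤ (2 * L - L) * (2 * (pE u t₁ + pE u t₂) * Real.exp (-2 * (L - 1))) := h1
    _ = L * (2 * (pE u t₁ + pE u t₂) * Real.exp (-2 * (L - 1))) := by ring
  -- numeric estimate
  have hkey : 4 * L * Real.exp (-2 * (L - 1)) ≤ Real.exp (-L) := by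
    have h1 := Real.add_one_le_exp ((L - 2) / 2)
    have h2 : Real.exp (L - 2) = Real.exp ((L - 2) / 2) ^ 2 := by
      rw [sq, ← Real.exp_add]
      congr 1
      ring
    have h3 : 4 * L ≤ Real.exp (L - 2) := by
      rw [h2]
      have h4 : ((L - 2) / 2 + 1) ^ 2 ≤ Real.exp ((L - 2) / 2) ^ 2 :=
        pow_le_pow_left₀ (by linarith) h1 2
      nlinarith
    have harg : (-2 * (L - 1) : ℝ) = -(L - 2) + -L := by ring
    calc 4 * L * Real.exp (-2 * (L - 1))
        = 4 * L * (Real.exp (-(L - 2)) * Real.exp (-L)) := by rw [harg, Real.exp_add]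
    _ ≤ Real.exp (L - 2) * (Real.exp (-(L - 2)) * Real.exp (-L)) := by
        apply mul_le_mul_of_nonneg_right h3 (by positivity)
    _ = Real.exp (-L) := by
        rw [← mul_assoc, ← Real.exp_add, add_neg_cancel, Real.exp_zero, one_mul]
  -- put everything together
  have hM0 : 0 ≤ max (N 1 ^ 2) (N 3 ^ 2) := le_trans (sq_nonneg _) (le_max_left _ _)
  have hmax : N 2 ^ 2 ≤ Real.exp (-L) * max (N 1 ^ 2) (N 3 ^ 2) := by
    have hmax1 : pE u t₁ ≤ max (N 1 ^ 2) (N 3 ^ 2) := le_trans hEt₁ (le_max_left _ _)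
    have hmax2 : pE u t₂ ≤ max (N 1 ^ 2) (N 3 ^ 2) := le_trans hEt₂ (le_max_right _ _)
    have hexp0 : (0:ℝ) < Real.exp (-2 * (L - 1)) := Real.exp_pos _
    calc N 2 ^ 2 ≤ L * (2 * (pE u t₁ + pE u t₂) * Real.exp (-2 * (L - 1))) := hN2sqle
    _ ≤ L * (2 * (max (N 1 ^ 2) (N 3 ^ 2) + max (N 1 ^ 2) (N 3 ^ 2))
        * Real.exp (-2 * (L - 1))) := by
        apply mul_le_mul_of_nonneg_left _ (le_of_lt hL0)
        apply mul_le_mul_of_nonneg_right _ (le_of_lt hexp0)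
        linarith
    _ = (4 * L * Real.exp (-2 * (L - 1))) * max (N 1 ^ 2) (N 3 ^ 2) := by ring
    _ ≤ Real.exp (-L) * max (N 1 ^ 2) (N 3 ^ 2) :=
        mul_le_mul_of_nonneg_right hkey hM0
  have hhalf : ∀ c : ℝ, 0 ≤ c → Real.exp (-L) * c ^ 2 = (Real.exp (-L / 2) * c) ^ 2 := by
    intro c _
    rw [mul_pow, sq (Real.exp (-L / 2)), ← Real.exp_add]
    congr 2
    ring
  rcases le_total (N 1) (N 3) with hc | hc
  · right
    have h1 : max (N 1 ^ 2) (N 3 ^ 2) = N 3 ^ 2 :=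
      max_eq_right (pow_le_pow_left₀ hN1pos hc 2)
    rw [h1, hhalf (N 3) hN3pos] at hmax
    calc N 2 = Real.sqrt (N 2 ^ 2) := (Real.sqrt_sq hN2pos).symm
    _ ≤ Real.sqrt ((Real.exp (-L / 2) * N 3) ^ 2) := Real.sqrt_le_sqrt hmax
    _ = Real.exp (-L / 2) * N 3 := Real.sqrt_sq (by positivity)
  · left
    have h1 : max (N 1 ^ 2) (N 3 ^ 2) = N 1 ^ 2 :=
      max_eq_left (pow_le_pow_left₀ hN3pos hc 2)
    rw [h1, hhalf (N 1) hN1pos] at hmax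
    calc N 2 = Real.sqrt (N 2 ^ 2) := (Real.sqrt_sq hN2pos).symm
    _ ≤ Real.sqrt ((Real.exp (-L / 2) * N 1) ^ 2) := Real.sqrt_le_sqrt hmax
    _ = Real.exp (-L / 2) * N 1 := Real.sqrt_sq (by positivity)

end Main
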